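/- Suppose a nonnegative function e on a geodesic ball B_{r/2}(x) satisfies: for every point y₀ in the ball, with s₀ = (r/2 - d(x,y₀))/2 and e₀ = e(y₀), the mean-value type inequality s³ e₀ ≤ cε + c s⁵(e₀^{3/2} + e₀) holds for all s ≤ s₀, where ε > 0, and the function θ(y) = (r/2 - d(x,y))³ e(y) attains its maximum at y₀. If ε is smaller than a constant ε₀ depending only on c, then max θ ≤ C max{1, r³} ε for a constant C depending only on c. -/

import Mathlib

private lemma rpow_pow (x : ℝ) (hx : 0 ≤ x) (p : ℝ) (n : ℕ) :
    (x ^ p) ^ n = x ^ (p * n) := by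
  rw [← Real.rpow_natCast (x ^ p) n, ← Real.rpow_mul hx]

set_option maxHeartbeats 1000000 in
/-- The Heinz trick at the core of the ε-regularity theorem: if the nonnegative
density `e` is such that `θ(y) = (r/2 - d(x,y))³ e(y)` attains its maximum on the
closed ball at `y₀`, and the mean-value inequality
`s³e₀ ≤ cε + cs⁵(e₀^{3/2} + e₀)` holds for all `s ≤ s₀ = (r/2 - d(x,y₀))/2`, then
for `ε ≤ ε₀(c)` one has `max θ ≤ C max{1, r³} ε` with `C = C(c)`. -/
theorem heinz_trick (c : ℝ) (hc : 0 < c) :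
    ∃ ε₀ > (0 : ℝ), ∃ C > (0 : ℝ),
      ∀ (X : Type) [MetricSpace X], ∀ (x : X) (r ε : ℝ) (e : X → ℝ) (y₀ : X),
        0 < r → (∀ y, 0 ≤ e y) →
        y₀ ∈ Metric.ball x (r / 2) →
        (∀ y ∈ Metric.closedBall x (r / 2),
          (r / 2 - dist x y) ^ 3 * e y ≤ (r / 2 - dist x y₀) ^ 3 * e y₀) →
        (∀ s, 0 < s → s ≤ (r / 2 - dist x y₀) / 2 →
          s ^ 3 * e y₀ ≤ c * ε + c * s ^ 5 * ((e y₀) ^ ((3 : ℝ) / 2) + e y₀)) →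
        0 < ε → ε ≤ ε₀ →
        (r / 2 - dist x y₀) ^ 3 * e y₀ ≤ C * max 1 (r ^ 3) * ε := by
  have h4c : (0:ℝ) < 4 * c := by linarith
  refine ⟨(4*c) ^ (-(3:ℝ)/2) / (4*c), by positivity,
    32*c + 2*c*(4*c) ^ ((3:ℝ)/2), by positivity, ?_⟩
  intro X _ x r ε e y₀ hr he hball _hmax hs hε hε₀
  set d := dist x y₀ with hd
  set e₀ := e y₀ with he₀def
  set E := e₀ ^ ((3:ℝ)/2) with hEdef
  have he₀ : 0 ≤ e₀ := he y₀
  have hdnn : 0 ≤ d := dist_nonneg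
  have hdr : d < r / 2 := by rw [hd, dist_comm]; exact Metric.mem_ball.mp hball
  set s₀ := (r/2 - d)/2 with hs₀def
  have hs₀pos : 0 < s₀ := by rw [hs₀def]; linarith
  have hs₀r : s₀ ≤ r/4 := by rw [hs₀def]; linarith
  have hmax1 : (1:ℝ) ≤ max 1 (r^3) := le_max_left _ _
  have hmaxr : r^3 ≤ max 1 (r^3) := le_max_right _ _
  have hgoal : (r/2 - d)^3 * e₀ = 8 * (s₀^3 * e₀) := by rw [hs₀def]; ring
  rw [hgoal]
  have hC32 : (4*c) ^ ((3:ℝ)/2) > 0 := Real.rpow_pos_of_pos h4c _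
  rcases le_or_gt e₀ 1 with h1 | h1
  · -- case e₀ ≤ 1 : E ≤ e₀
    have hE : E ≤ e₀ := by
      rcases eq_or_lt_of_le he₀ with h0 | h0
      · rw [hEdef, ← h0, Real.zero_rpow (by norm_num)]
      · rw [hEdef]
        nth_rewrite 2 [← Real.rpow_one e₀]
        exact Real.rpow_le_rpow_of_exponent_ge h0 h1 (by norm_num)
    have hEnn : 0 ≤ E := Real.rpow_nonneg he₀ _
    set σ := (4*c) ^ (-(1:ℝ)/2) with hσdef
    have hσpos : 0 < σ := Real.rpow_pos_of_pos h4c _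
    have hσ2 : c * σ^2 = 1/4 := by
      rw [hσdef, rpow_pow _ h4c.le]
      norm_num [Real.rpow_neg_one]
      field_simp
    rcases le_or_gt s₀ σ with h2 | h2
    · -- use s = s₀ : s₀³e₀ ≤ 2cε
      have hineq := hs s₀ hs₀pos (le_refl _)

      have hsq : s₀^2 ≤ σ^2 := pow_le_pow_left₀ hs₀pos.le h2 2
      have h5 : s₀^5 * (E + e₀) ≤ σ^2 * (s₀^3 * (2 * e₀)) := by
        have hA : s₀^5 * (E + e₀) ≤ s₀^5 * (2*e₀) :=
          mul_le_mul_of_nonneg_left (by linarith) (by positivity)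
        have hB : s₀^5 * (2*e₀) = s₀^2 * (s₀^3 * (2*e₀)) := by ring
        have hCk : s₀^2 * (s₀^3 * (2*e₀)) ≤ σ^2 * (s₀^3 * (2*e₀)) :=
          mul_le_mul_of_nonneg_right hsq (by positivity)
        linarith
      have h6 : c * s₀^5 * (E+e₀) ≤ (1/2) * (s₀^3 * e₀) := by
        have hA := mul_le_mul_of_nonneg_left h5 hc.le
        calc c * s₀^5 * (E+e₀) = c * (s₀^5 * (E + e₀)) := by ring
          _ ≤ c * (σ^2 * (s₀^3 * (2 * e₀))) := hA
          _ = (c * σ^2) * (2 * (s₀^3 * e₀)) := by ring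
          _ = (1/4) * (2 * (s₀^3 * e₀)) := by rw [hσ2]
          _ = (1/2) * (s₀^3 * e₀) := by ring
      have h7 : s₀^3 * e₀ ≤ 2 * c * ε := by linarith
      have hmε : ε ≤ max 1 (r^3) * ε := le_mul_of_one_le_left hε.le hmax1
      have hcε : 0 < c * ε := mul_pos hc hε
      have h8 : 16 * c * ε ≤ 32 * c * (max 1 (r^3) * ε) := by
        have := mul_le_mul_of_nonneg_left hmε (by positivity : (0:ℝ) ≤ 32*c)
        linarith
      have h9 : (0:ℝ) ≤ 2*c*(4*c) ^ ((3:ℝ)/2) * (max 1 (r^3) * ε) := by positivity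
      calc 8 * (s₀^3 * e₀) ≤ 16 * c * ε := by linarith
        _ ≤ (32*c + 2*c*(4*c) ^ ((3:ℝ)/2)) * max 1 (r^3) * ε := by linarith
    · -- use s = σ : e₀ ≤ 2cε(4c)^{3/2}
      have hineq := hs σ hσpos (by linarith)

      have h6 : c * σ^5 * (E+e₀) ≤ (1/2) * (σ^3 * e₀) := by
        have h5 : σ^5 * (E + e₀) ≤ σ^2 * (σ^3 * (2*e₀)) := by
          have hA : σ^5 * (E + e₀) ≤ σ^5 * (2*e₀) :=
            mul_le_mul_of_nonneg_left (by linarith) (by positivity)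
          have hB : σ^5 * (2*e₀) = σ^2 * (σ^3 * (2*e₀)) := by ring
          linarith
        have hA := mul_le_mul_of_nonneg_left h5 hc.le
        calc c * σ^5 * (E+e₀) = c * (σ^5 * (E + e₀)) := by ring
          _ ≤ c * (σ^2 * (σ^3 * (2 * e₀))) := hA
          _ = (c * σ^2) * (2 * (σ^3 * e₀)) := by ring
          _ = (1/4) * (2 * (σ^3 * e₀)) := by rw [hσ2]
          _ = (1/2) * (σ^3 * e₀) := by ring
      have hσ3e : σ^3 * e₀ ≤ 2 * c * ε := by linarith
      have hσ3 : σ^3 * (4*c) ^ ((3:ℝ)/2) = 1 := by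
        rw [hσdef, rpow_pow _ h4c.le, ← Real.rpow_add h4c]
        norm_num
      have he₀bound : e₀ ≤ 2 * c * ε * (4*c) ^ ((3:ℝ)/2) := by
        have := mul_le_mul_of_nonneg_right hσ3e hC32.le
        calc e₀ = σ^3 * e₀ * (4*c) ^ ((3:ℝ)/2) / (σ^3 * (4*c) ^ ((3:ℝ)/2)) := by
              field_simp
          _ = σ^3 * e₀ * (4*c) ^ ((3:ℝ)/2) := by rw [hσ3]; ring_nf
          _ ≤ 2 * c * ε * (4*c) ^ ((3:ℝ)/2) := by nlinarith
      have hs₀3 : s₀^3 ≤ (r/4)^3 := pow_le_pow_left₀ hs₀pos.le hs₀r 3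
      have hrr : (r/4)^3 = r^3/64 := by ring
      -- 8 * s₀³ e₀ ≤ 8 * r³/64 * (2c(4c)^{3/2} ε) = r³ (4c)^{3/2} c ε /4
      have step : 8 * (s₀^3 * e₀) ≤ (r^3/8) * (2 * c * ε * (4*c) ^ ((3:ℝ)/2)) := by
        have h8 : s₀^3 * e₀ ≤ r^3/64 * (2 * c * ε * (4*c) ^ ((3:ℝ)/2)) := by
          calc s₀^3 * e₀ ≤ (r/4)^3 * e₀ := mul_le_mul_of_nonneg_right hs₀3 he₀
            _ ≤ (r/4)^3 * (2 * c * ε * (4*c) ^ ((3:ℝ)/2)) := by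
                apply mul_le_mul_of_nonneg_left he₀bound (by positivity)
            _ = r^3/64 * (2 * c * ε * (4*c) ^ ((3:ℝ)/2)) := by rw [hrr]
        linarith
      have hrm : r^3 * (2 * c * ε * (4*c) ^ ((3:ℝ)/2)) ≤
          max 1 (r^3) * (2 * c * ε * (4*c) ^ ((3:ℝ)/2)) := by
        apply mul_le_mul_of_nonneg_right hmaxr (by positivity)
      have hA : (0:ℝ) ≤ 32*c*(max 1 (r^3)*ε) := by positivity
      have hB : (0:ℝ) ≤ c*(4*c) ^ ((3:ℝ)/2)*(max 1 (r^3))*ε := by positivity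
      linarith [step, hrm, hA, hB]
  · -- case e₀ > 1
    have he₀pos : (0:ℝ) < e₀ := lt_trans one_pos h1
    have hE : e₀ ≤ E := by
      rw [hEdef]
      nth_rewrite 1 [← Real.rpow_one e₀]
      exact Real.rpow_le_rpow_of_exponent_le h1.le (by norm_num)
    have key : s₀^3 * e₀ ≤ 4 * c * ε := by
      by_contra hcon
      push_neg at hcon
      obtain ⟨a, ha_def⟩ : ∃ a : ℝ, a = (4*c*ε/e₀) ^ ((1:ℝ)/3) := ⟨_, rfl⟩
      have hbase : (0:ℝ) < 4*c*ε/e₀ := by positivity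
      have ha_pos : 0 < a := by rw [ha_def]; exact Real.rpow_pos_of_pos hbase _
      have ha3 : a^3 = 4*c*ε/e₀ := by
        rw [ha_def, rpow_pow _ hbase.le]; norm_num
      have halt : a < s₀ := by
        have h3 : a^3 < s₀^3 := by
          rw [ha3, div_lt_iff₀ he₀pos]
          exact hcon
        exact lt_of_pow_lt_pow_left₀ 3 hs₀pos.le h3
      have hineq := hs a ha_pos halt.le

      have ha3e : a^3 * e₀ = 4*c*ε := by rw [ha3]; exact div_mul_cancel₀ _ he₀pos.ne'
      -- E^6 = e₀^9
      have hE6 : E^6 = e₀^9 := by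
        rw [hEdef, rpow_pow _ he₀]
        norm_num
      -- sixth power argument: a^5 * E ≤ ε
      have hstep : a^5 * E ≤ ε := by
        have hEnn' : 0 ≤ E := Real.rpow_nonneg he₀ _
        have hLnn : 0 ≤ a^5 * E := by positivity
        refine le_of_pow_le_pow_left₀ (n := 6) (by norm_num) hε.le ?_
        have hexp : (a^5 * E)^6 = (a^3)^10 * e₀^9 := by
          rw [mul_pow, hE6]; ring
        have hval : (a^5*E)^6 * e₀ = (4*c*ε)^10 := by
          rw [hexp, ha3, div_pow]
          field_simp
        have h10 : (4*c*ε)^10 = ((4*c)^10 * ε^4) * ε^6 := by ring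
        have hεkey : (4*c)^10 * ε^4 ≤ 1 := by
          have h1' : ε^4 ≤ ((4*c) ^ (-(3:ℝ)/2) / (4*c))^4 := pow_le_pow_left₀ hε.le hε₀ 4
          have h2' : ((4*c) ^ (-(3:ℝ)/2) / (4*c))^4 * (4*c)^10 = 1 := by
            rw [div_pow, rpow_pow _ h4c.le]
            have : (4*c) ^ ((-(3:ℝ)/2) * (4:ℕ)) = ((4*c)^(6:ℕ))⁻¹ := by
              rw [show ((-(3:ℝ)/2) * (4:ℕ)) = -((6:ℕ):ℝ) by norm_num,
                Real.rpow_neg h4c.le, Real.rpow_natCast]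
            rw [this]
            field_simp
          calc (4*c)^10 * ε^4 ≤ (4*c)^10 * ((4*c) ^ (-(3:ℝ)/2) / (4*c))^4 :=
                mul_le_mul_of_nonneg_left h1' (by positivity)
            _ = 1 := by linarith [h2']
        have hmono : (a^5*E)^6 ≤ (a^5*E)^6 * e₀ :=
          le_mul_of_one_le_right (pow_nonneg hLnn 6) h1.le
        have : (a^5*E)^6 ≤ ε^6 := by
          calc (a^5*E)^6 ≤ (a^5*E)^6 * e₀ := hmono
            _ = ((4*c)^10 * ε^4) * ε^6 := by rw [hval, h10]
            _ ≤ 1 * ε^6 := mul_le_mul_of_nonneg_right hεkey (pow_nonneg hε.le 6)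
            _ = ε^6 := one_mul _
        exact this
      have hEnn : 0 ≤ E := Real.rpow_nonneg he₀ _
      have ha5nn : 0 ≤ a^5 := by positivity
      have h2E : a^5 * (E + e₀) ≤ 2 * (a^5 * E) :=
        le_of_sub_nonneg (by have : a^5 * (e₀) ≤ a^5 * E :=
          mul_le_mul_of_nonneg_left hE ha5nn; nlinarith)
      have hfinal : 4*c*ε ≤ c*ε + 2*c*ε := by
        calc 4*c*ε = a^3 * e₀ := ha3e.symm
          _ ≤ c * ε + c * a^5 * (E + e₀) := hineq
          _ ≤ c * ε + c * (2 * (a^5 * E)) := by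
              have := mul_le_mul_of_nonneg_left h2E hc.le
              linarith [this, (by ring : c * a^5 * (E+e₀) = c * (a^5 * (E+e₀)))]
          _ ≤ c * ε + c * (2 * ε) := by
              have := mul_le_mul_of_nonneg_left hstep (by positivity : (0:ℝ) ≤ 2)
              have := mul_le_mul_of_nonneg_left this hc.le
              linarith
          _ = c*ε + 2*c*ε := by ring
      linarith [mul_pos hc hε]
    have hmε : ε ≤ max 1 (r^3) * ε := le_mul_of_one_le_left hε.le hmax1
    have h8 : 32 * c * ε ≤ 32 * c * (max 1 (r^3) * ε) :=
      mul_le_mul_of_nonneg_left hmε (by positivity)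
    have h9 : (0:ℝ) ≤ 2*c*(4*c) ^ ((3:ℝ)/2) * (max 1 (r^3) * ε) := by positivity
    linarith
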